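/- arXiv:2312.07880 — 2 statements merged into one kernel-verified Lean document; each statement's English description precedes it below -/
import Mathlib

section
/- For a unit vector ω ∈ ℝ^d and gamma matrices satisfying the Clifford relations with (γ^μ)^* = -η_{μν}γ^ν, the identity [Ψ]_+^* γ^0 [Φ]_+ = 0 holds, where [Ψ]_± = Ψ ± ω_a γ^0 γ^a Ψ. -/
open Matrix

noncomputable def minkEta (d : ℕ) (μ ν : Fin (d + 1)) : ℂ :=
  if μ = ν then (if μ = 0 then -1 else 1) else 0

/-- For a unit vector `ω ∈ ℝ^d` and gamma matrices satisfying the Clifford relations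
with `(γ^μ)^* = -η_{μν} γ^ν`, one has `[Ψ]_+^* γ^0 [Φ]_+ = 0`,
where `[Ψ]_± = Ψ ± ω_a γ^0 γ^a Ψ`. -/
theorem plus_plus_vanishes (d N : ℕ) (γ : Fin (d + 1) → Matrix (Fin N) (Fin N) ℂ)
    (hγ : ∀ μ ν, γ μ * γ ν + γ ν * γ μ
      = (-2 * minkEta d μ ν) • (1 : Matrix (Fin N) (Fin N) ℂ))
    (hstar0 : (γ 0)ᴴ = γ 0)
    (hstara : ∀ μ : Fin (d + 1), μ ≠ 0 → (γ μ)ᴴ = -(γ μ))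
    (ω : Fin d → ℝ) (hω : ∑ a, ω a ^ 2 = 1)
    (Ψ Φ : Fin N → ℂ) :
    star (Ψ + ∑ a, ((ω a : ℝ) : ℂ) • (γ 0 * γ a.succ).mulVec Ψ) ⬝ᵥ
      (γ 0).mulVec (Φ + ∑ a, ((ω a : ℝ) : ℂ) • (γ 0 * γ a.succ).mulVec Φ) = 0 := by
  set A : Matrix (Fin N) (Fin N) ℂ := ∑ a, ((ω a : ℝ) : ℂ) • (γ 0 * γ a.succ) with hAdef
  -- basic Clifford facts
  have h00 : γ 0 * γ 0 = 1 := by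
    have h := hγ 0 0
    simp only [minkEta, if_pos rfl] at h
    norm_num at h
    have h2 : (2 : ℂ) • (γ 0 * γ 0) = (2 : ℂ) • (1 : Matrix (Fin N) (Fin N) ℂ) := by
      rw [two_smul]; exact h
    exact smul_right_injective _ (two_ne_zero) h2
  have hanti : ∀ a : Fin d, γ a.succ * γ 0 = -(γ 0 * γ a.succ) := by
    intro a
    have h := hγ 0 a.succ
    have hne : (0 : Fin (d+1)) ≠ a.succ := (Fin.succ_ne_zero a).symm
    simp only [minkEta, if_neg hne] at h
    norm_num at h
    rw [add_comm] at h
    exact eq_neg_of_add_eq_zero_left h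
  have hdiag : ∀ a : Fin d, γ a.succ * γ a.succ = -1 := by
    intro a
    have h := hγ a.succ a.succ
    have : minkEta d a.succ a.succ = 1 := by
      simp [minkEta, Fin.succ_ne_zero]
    rw [this] at h
    norm_num at h
    have h2 : (2 : ℂ) • (γ a.succ * γ a.succ)
        = (2 : ℂ) • (-1 : Matrix (Fin N) (Fin N) ℂ) := by
      rw [two_smul]
      rw [h]
      simp
    exact smul_right_injective _ (two_ne_zero) h2
  have hoff : ∀ a b : Fin d, a ≠ b → γ a.succ * γ b.succ + γ b.succ * γ a.succ = 0 := by
    intro a b hne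
    have h := hγ a.succ b.succ
    have : minkEta d a.succ b.succ = 0 := by
      simp [minkEta, Fin.succ_inj, hne]
    rw [this] at h
    simpa using h
  -- A is hermitian
  have hAH : Aᴴ = A := by
    rw [hAdef, conjTranspose_sum]
    refine Finset.sum_congr rfl fun a _ => ?_
    rw [conjTranspose_smul, conjTranspose_mul, hstar0, hstara a.succ (Fin.succ_ne_zero a),
      neg_mul, hanti a, neg_neg]
    congr 1
    simp [Complex.conj_ofReal]
  -- A anticommutes with γ 0
  have hAγ0 : A * γ 0 = -(γ 0 * A) := by
    rw [hAdef, Finset.sum_mul, Finset.mul_sum, ← Finset.sum_neg_distrib]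
    refine Finset.sum_congr rfl fun a _ => ?_
    rw [smul_mul_assoc, mul_smul_comm, ← smul_neg]
    congr 1
    rw [mul_assoc, hanti a, mul_neg]
  -- key product formula
  have term : ∀ a b : Fin d, (γ 0 * γ a.succ) * (γ 0 * γ b.succ)
      = -(γ a.succ * γ b.succ) := by
    intro a b
    calc (γ 0 * γ a.succ) * (γ 0 * γ b.succ)
        = γ 0 * ((γ a.succ * γ 0) * γ b.succ) := by noncomm_ring
      _ = γ 0 * ((-(γ 0 * γ a.succ)) * γ b.succ) := by rw [hanti a]
      _ = -((γ 0 * γ 0) * (γ a.succ * γ b.succ)) := by noncomm_ring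
      _ = -(γ a.succ * γ b.succ) := by rw [h00, one_mul]
  -- A squares to one
  have hωC : (∑ a, ((ω a : ℝ) : ℂ) ^ 2) = 1 := by exact_mod_cast hω
  have hA2 : A * A = 1 := by
    have expand : A * A = ∑ a, ∑ b, (((ω a : ℝ) : ℂ) * ((ω b : ℝ) : ℂ)) •
        ((γ 0 * γ a.succ) * (γ 0 * γ b.succ)) := by
      rw [hAdef, Finset.sum_mul]
      refine Finset.sum_congr rfl fun a _ => ?_
      rw [Finset.mul_sum]
      refine Finset.sum_congr rfl fun b _ => ?_
      rw [smul_mul_assoc, mul_smul_comm, smul_smul]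
    have key2 : (2 : ℂ) • (A * A) = (2 : ℂ) • (1 : Matrix (Fin N) (Fin N) ℂ) := by
      rw [two_smul]
      rw [expand]
      nth_rewrite 2 [Finset.sum_comm]
      rw [← Finset.sum_add_distrib]
      have inner : ∀ a : Fin d,
          (∑ b, (((ω a : ℝ) : ℂ) * ((ω b : ℝ) : ℂ)) •
              ((γ 0 * γ a.succ) * (γ 0 * γ b.succ))
            + ∑ b, (((ω b : ℝ) : ℂ) * ((ω a : ℝ) : ℂ)) •
              ((γ 0 * γ b.succ) * (γ 0 * γ a.succ)))
          = (((ω a : ℝ) : ℂ) ^ 2) • ((2 : ℂ) • (1 : Matrix (Fin N) (Fin N) ℂ)) := by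
        intro a
        rw [← Finset.sum_add_distrib]
        rw [Finset.sum_eq_single a]
        · rw [term a a, hdiag a, neg_neg, smul_smul, ← add_smul]
          congr 1
          ring
        · intro b _ hb
          rw [term a b, term b a, mul_comm (((ω b : ℝ) : ℂ)), ← smul_add,
            ← neg_add, hoff a b (Ne.symm hb), neg_zero, smul_zero]
        · intro h; exact absurd (Finset.mem_univ a) h
      rw [Finset.sum_congr rfl fun a _ => inner a, ← Finset.sum_smul, hωC, one_smul]
    exact smul_right_injective _ (two_ne_zero) key2
  -- the key matrix identity
  have key : (1 + A) * (γ 0 * (1 + A)) = 0 := by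
    calc (1 + A) * (γ 0 * (1 + A))
        = γ 0 + γ 0 * A + (A * γ 0 + (A * γ 0) * A) := by noncomm_ring
      _ = γ 0 + γ 0 * A + (-(γ 0 * A) + (-(γ 0 * A)) * A) := by rw [hAγ0]
      _ = γ 0 - γ 0 * (A * A) := by noncomm_ring
      _ = 0 := by rw [hA2, mul_one, sub_self]
  -- vector rewriting
  have hsum : ∀ v : Fin N → ℂ,
      (∑ a, ((ω a : ℝ) : ℂ) • (γ 0 * γ a.succ)) *ᵥ v
        = ∑ a, (((ω a : ℝ) : ℂ) • (γ 0 * γ a.succ)) *ᵥ v := by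
    intro v
    ext i
    simp only [mulVec, dotProduct, Matrix.sum_apply, Matrix.smul_apply, Finset.sum_apply,
      Finset.sum_mul, smul_eq_mul]
    rw [Finset.sum_comm]
  have hvec : ∀ v : Fin N → ℂ,
      v + ∑ a, ((ω a : ℝ) : ℂ) • (γ 0 * γ a.succ).mulVec v = (1 + A).mulVec v := by
    intro v
    rw [add_mulVec, one_mulVec, hAdef, hsum v]
    simp [smul_mulVec]
  rw [hvec Ψ, hvec Φ, mulVec_mulVec, star_mulVec, dotProduct_mulVec, vecMul_vecMul]
  have h1A : (1 + A)ᴴ = 1 + A := by rw [conjTranspose_add, conjTranspose_one, hAH]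
  rw [h1A, key]
  simp
end

section
/- (Null decomposition bounds the product) Let Ψ, Φ ∈ ℂ^N, ω ∈ ℝ^d a unit vector, and [Ψ]_± = Ψ ± ω_a γ^0 γ^a Ψ with gamma matrices satisfying the Clifford relations and (γ^μ)^* = -η_{μν}γ^ν. Then |Ψ^* γ^0 Φ| ≤ (1/4)( |[Ψ]_-| |[Φ]_-| + |[Ψ]_-| |[Φ]_+| + |[Ψ]_+| |[Φ]_-| ), and in particular |Ψ^* γ^0 Φ| ≤ C( |[Ψ]_-| |Φ| + |Ψ| |[Φ]_-| ) for an absolute constant C. -/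
open Matrix

/-- Euclidean (ℓ²) norm of a vector in `ℂ^N`. -/
noncomputable def evnorm {N : ℕ} (v : Fin N → ℂ) : ℝ :=
  Real.sqrt (∑ i, Complex.normSq (v i))

/-!
With `A = ω_a γ^0 γ^a` one has `[Ψ]_± = (1 ± A) Ψ`. The Clifford relations make `A` a Hermitian
involution (`A² = |ω|² = 1`) that anticommutes with `γ^0`, and these two facts alone give
`(1 - A) γ^0 (1 - A) + (1 - A) γ^0 (1 + A) + (1 + A) γ^0 (1 - A) = 4 γ^0`.
Pairing with `Ψ, Φ`, Cauchy–Schwarz and the unitarity of `γ^0` give the first bound;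
`|(1 ± A) v| ≤ 2 |v|` then gives the second one with `C = 1`.
-/

section EuclideanNorm

variable {N : ℕ}

lemma evnorm_eq_norm_toLp (v : Fin N → ℂ) : evnorm v = ‖WithLp.toLp 2 v‖ := by
  simp only [evnorm, EuclideanSpace.norm_eq, Complex.sq_norm]

lemma star_dotProduct_eq_inner (x y : Fin N → ℂ) :
    star x ⬝ᵥ y = inner ℂ (WithLp.toLp 2 x) (WithLp.toLp 2 y) := by
  rw [EuclideanSpace.inner_toLp_toLp, dotProduct_comm]

lemma evnorm_nonneg (v : Fin N → ℂ) : 0 ≤ evnorm v := Real.sqrt_nonneg _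

lemma evnorm_add_le (u v : Fin N → ℂ) : evnorm (u + v) ≤ evnorm u + evnorm v := by
  simpa only [evnorm_eq_norm_toLp, WithLp.toLp_add] using norm_add_le _ _

lemma evnorm_sub_le (u v : Fin N → ℂ) : evnorm (u - v) ≤ evnorm u + evnorm v := by
  simpa only [evnorm_eq_norm_toLp, WithLp.toLp_sub] using norm_sub_le _ _

lemma norm_star_dotProduct_le (x y : Fin N → ℂ) : ‖star x ⬝ᵥ y‖ ≤ evnorm x * evnorm y := by
  rw [star_dotProduct_eq_inner, evnorm_eq_norm_toLp, evnorm_eq_norm_toLp]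
  exact norm_inner_le_norm _ _

lemma evnorm_mulVec_of_conjTranspose_mul_self {M : Matrix (Fin N) (Fin N) ℂ} (hM : Mᴴ * M = 1)
    (v : Fin N → ℂ) : evnorm (M *ᵥ v) = evnorm v := by
  have h : star (M *ᵥ v) ⬝ᵥ (M *ᵥ v) = star v ⬝ᵥ v := by
    rw [star_mulVec, ← dotProduct_mulVec, mulVec_mulVec, hM, one_mulVec]
  rw [evnorm_eq_norm_toLp, evnorm_eq_norm_toLp, norm_eq_sqrt_re_inner (𝕜 := ℂ),
    norm_eq_sqrt_re_inner (𝕜 := ℂ), ← star_dotProduct_eq_inner, ← star_dotProduct_eq_inner, h]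

lemma norm_star_dotProduct_mulVec_le {M : Matrix (Fin N) (Fin N) ℂ} (hM : Mᴴ * M = 1)
    (x y : Fin N → ℂ) : ‖star x ⬝ᵥ M *ᵥ y‖ ≤ evnorm x * evnorm y := by
  simpa only [evnorm_mulVec_of_conjTranspose_mul_self hM] using norm_star_dotProduct_le x (M *ᵥ y)

lemma evnorm_one_add_mulVec_le {M : Matrix (Fin N) (Fin N) ℂ} (hM : Mᴴ * M = 1)
    (v : Fin N → ℂ) : evnorm ((1 + M) *ᵥ v) ≤ 2 * evnorm v := by
  calc evnorm ((1 + M) *ᵥ v) ≤ evnorm v + evnorm (M *ᵥ v) := by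
        simpa only [add_mulVec, one_mulVec] using evnorm_add_le v (M *ᵥ v)
    _ = 2 * evnorm v := by rw [evnorm_mulVec_of_conjTranspose_mul_self hM]; ring

lemma evnorm_one_sub_mulVec_le {M : Matrix (Fin N) (Fin N) ℂ} (hM : Mᴴ * M = 1)
    (v : Fin N → ℂ) : evnorm ((1 - M) *ᵥ v) ≤ 2 * evnorm v := by
  calc evnorm ((1 - M) *ᵥ v) ≤ evnorm v + evnorm (M *ᵥ v) := by
        simpa only [sub_mulVec, one_mulVec] using evnorm_sub_le v (M *ᵥ v)
    _ = 2 * evnorm v := by rw [evnorm_mulVec_of_conjTranspose_mul_self hM]; ring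

end EuclideanNorm

lemma null_split_eq_four_mul {R : Type*} [Ring R]
    {A g : R} (hA : A * A = 1) (hAg : A * g = -(g * A)) :
    (1 - A) * g * (1 - A) + (1 - A) * g * (1 + A) + (1 + A) * g * (1 - A) = 4 * g := by
  simp only [mul_sub, sub_mul, mul_add, add_mul, one_mul, mul_one, hAg, neg_mul, mul_assoc, hA]
  noncomm_ring

section NullDecomposition

variable {N : ℕ} {A g : Matrix (Fin N) (Fin N) ℂ}

lemma star_dotProduct_mulVec_eq_null_split (hAH : Aᴴ = A) (hA : A * A = 1)
    (hAg : A * g = -(g * A)) (Ψ Φ : Fin N → ℂ) :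
    star Ψ ⬝ᵥ g *ᵥ Φ = (1 / 4) *
      (star ((1 - A) *ᵥ Ψ) ⬝ᵥ g *ᵥ (1 - A) *ᵥ Φ + star ((1 - A) *ᵥ Ψ) ⬝ᵥ g *ᵥ (1 + A) *ᵥ Φ
        + star ((1 + A) *ᵥ Ψ) ⬝ᵥ g *ᵥ (1 - A) *ᵥ Φ) := by
  have sandwich (P Q : Matrix (Fin N) (Fin N) ℂ) (hP : Pᴴ = P) :
      star (P *ᵥ Ψ) ⬝ᵥ g *ᵥ Q *ᵥ Φ = star Ψ ⬝ᵥ (P * g * Q) *ᵥ Φ := by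
    rw [star_mulVec, ← dotProduct_mulVec, hP, mulVec_mulVec, mulVec_mulVec, mul_assoc]
  have hsub : (1 - A)ᴴ = 1 - A := by rw [conjTranspose_sub, conjTranspose_one, hAH]
  have hadd : (1 + A)ᴴ = 1 + A := by rw [conjTranspose_add, conjTranspose_one, hAH]
  rw [sandwich _ _ hsub, sandwich _ _ hsub, sandwich _ _ hadd, ← dotProduct_add, ← dotProduct_add,
    ← add_mulVec, ← add_mulVec,
    null_split_eq_four_mul hA hAg]
  rw [← mulVec_mulVec, ofNat_mulVec, dotProduct_smul, smul_eq_mul, ← mul_assoc]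
  norm_num

variable (hAH : Aᴴ = A) (hA : A * A = 1) (hAg : A * g = -(g * A)) (hg : gᴴ * g = 1)
include hAH hA hAg hg

lemma norm_star_dotProduct_mulVec_le_null_split (Ψ Φ : Fin N → ℂ) :
    ‖star Ψ ⬝ᵥ g *ᵥ Φ‖ ≤ (1 / 4) *
      (evnorm ((1 - A) *ᵥ Ψ) * evnorm ((1 - A) *ᵥ Φ) + evnorm ((1 - A) *ᵥ Ψ) * evnorm ((1 + A) *ᵥ Φ)
        + evnorm ((1 + A) *ᵥ Ψ) * evnorm ((1 - A) *ᵥ Φ)) := by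
  rw [star_dotProduct_mulVec_eq_null_split hAH hA hAg, norm_mul]
  gcongr
  · norm_num
  refine norm_add₃_le.trans ?_
  gcongr <;> exact norm_star_dotProduct_mulVec_le hg _ _

lemma norm_star_dotProduct_mulVec_le_null_minus (Ψ Φ : Fin N → ℂ) :
    ‖star Ψ ⬝ᵥ g *ᵥ Φ‖ ≤ evnorm ((1 - A) *ᵥ Ψ) * evnorm Φ + evnorm Ψ * evnorm ((1 - A) *ᵥ Φ) := by
  have hA' : Aᴴ * A = 1 := by rw [hAH, hA]
  have hΨm := evnorm_nonneg ((1 - A) *ᵥ Ψ)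
  have hΦm := evnorm_nonneg ((1 - A) *ᵥ Φ)
  have hΨ := evnorm_nonneg Ψ
  calc ‖star Ψ ⬝ᵥ g *ᵥ Φ‖
      ≤ (1 / 4) * (evnorm ((1 - A) *ᵥ Ψ) * evnorm ((1 - A) *ᵥ Φ)
        + evnorm ((1 - A) *ᵥ Ψ) * evnorm ((1 + A) *ᵥ Φ)
        + evnorm ((1 + A) *ᵥ Ψ) * evnorm ((1 - A) *ᵥ Φ)) :=
        norm_star_dotProduct_mulVec_le_null_split hAH hA hAg hg Ψ Φ
    _ ≤ (1 / 4) * (evnorm ((1 - A) *ᵥ Ψ) * (2 * evnorm Φ)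
        + evnorm ((1 - A) *ᵥ Ψ) * (2 * evnorm Φ) + 2 * evnorm Ψ * evnorm ((1 - A) *ᵥ Φ)) := by
        gcongr
        exacts [evnorm_one_sub_mulVec_le hA' Φ, evnorm_one_add_mulVec_le hA' Φ,
          evnorm_one_add_mulVec_le hA' Ψ]
    _ ≤ evnorm ((1 - A) *ᵥ Ψ) * evnorm Φ + evnorm Ψ * evnorm ((1 - A) *ᵥ Φ) := by
        nlinarith

end NullDecomposition

lemma sum_smul_mul_sum_smul_of_anticomm {ι K R : Type*} [Fintype ι] [DecidableEq ι] [Field K]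
    [NeZero (2 : K)] [Ring R] [Algebra K R] (X : ι → R)
    (hX : ∀ a b, X a * X b + X b * X a = if a = b then 2 else 0) (c : ι → K) :
    (∑ a, c a • X a) * (∑ a, c a • X a) = algebraMap K R (∑ a, c a ^ 2) := by
  set S := (∑ a, c a • X a) * (∑ a, c a • X a)
  have hS : S = ∑ a, ∑ b, (c a * c b) • (X a * X b) := by
    simp only [S, Finset.sum_mul_sum, smul_mul_smul_comm]
  have hS' : S = ∑ a, ∑ b, (c a * c b) • (X b * X a) := by
    rw [hS, Finset.sum_comm]
    exact Finset.sum_congr rfl fun a _ => Finset.sum_congr rfl fun b _ => by rw [mul_comm (c b)]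
  have h2S : (2 : K) • S = (2 : K) • algebraMap K R (∑ a, c a ^ 2) := by
    calc (2 : K) • S = S + S := two_smul K S
      _ = ∑ a, ∑ b, (c a * c b) • (X a * X b + X b * X a) := by
        nth_rw 1 [hS]; rw [hS']; simp only [← Finset.sum_add_distrib, smul_add]
      _ = _ := by
        simp only [hX, smul_ite, smul_zero, Finset.sum_ite_eq, Finset.mem_univ, if_true]
        rw [← map_ofNat (algebraMap K R) 2]
        simp only [Algebra.smul_def, ← map_mul, ← map_sum, sq, mul_comm (2 : K), Finset.sum_mul]
  exact smul_right_injective R two_ne_zero h2S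

section Gamma

variable {d N : ℕ}

lemma minkEta_zero_zero : minkEta d 0 0 = -1 := by simp [minkEta]

lemma minkEta_zero_succ (a : Fin d) : minkEta d 0 a.succ = 0 := by
  simp [minkEta, (Fin.succ_ne_zero a).symm]

lemma minkEta_succ_succ (a b : Fin d) : minkEta d a.succ b.succ = if a = b then 1 else 0 := by
  simp [minkEta, Fin.succ_ne_zero]

variable (γ : Fin (d + 1) → Matrix (Fin N) (Fin N) ℂ)

noncomputable def nullMatrix (ω : Fin d → ℝ) : Matrix (Fin N) (Fin N) ℂ :=
  ∑ a, ((ω a : ℝ) : ℂ) • (γ 0 * γ a.succ)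

lemma nullMatrix_mulVec (ω : Fin d → ℝ) (v : Fin N → ℂ) :
    nullMatrix γ ω *ᵥ v = ∑ a, ((ω a : ℝ) : ℂ) • (γ 0 * γ a.succ) *ᵥ v := by
  simp only [nullMatrix, sum_mulVec, smul_mulVec]

variable
  (hγ : ∀ μ ν, γ μ * γ ν + γ ν * γ μ = (-2 * minkEta d μ ν) • (1 : Matrix (Fin N) (Fin N) ℂ))
include hγ

lemma gamma_zero_mul_self : γ 0 * γ 0 = 1 := by
  have h : (2 : ℂ) • (γ 0 * γ 0) = (2 : ℂ) • 1 := by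
    rw [two_smul, hγ, minkEta_zero_zero]; norm_num
  exact smul_right_injective _ two_ne_zero h

lemma gamma_succ_mul_gamma_zero (a : Fin d) : γ a.succ * γ 0 = -(γ 0 * γ a.succ) := by
  have h := hγ 0 a.succ
  rw [minkEta_zero_succ, mul_zero, zero_smul] at h
  exact eq_neg_of_add_eq_zero_right h

lemma gamma_zero_mul_gamma_succ_anticomm (a b : Fin d) :
    γ 0 * γ a.succ * (γ 0 * γ b.succ) + γ 0 * γ b.succ * (γ 0 * γ a.succ)
      = if a = b then 2 else 0 := by
  have flip (a b : Fin d) : γ 0 * γ a.succ * (γ 0 * γ b.succ) = -(γ a.succ * γ b.succ) := by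
    calc γ 0 * γ a.succ * (γ 0 * γ b.succ) = γ 0 * (γ a.succ * γ 0) * γ b.succ := by noncomm_ring
      _ = -(γ 0 * γ 0 * (γ a.succ * γ b.succ)) := by
        rw [gamma_succ_mul_gamma_zero γ hγ]; noncomm_ring
      _ = -(γ a.succ * γ b.succ) := by rw [gamma_zero_mul_self γ hγ, one_mul]
  rw [flip, flip, ← neg_add, hγ, minkEta_succ_succ]
  split_ifs <;> simp [two_smul, one_add_one_eq_two]

lemma nullMatrix_mul_self {ω : Fin d → ℝ} (hω : ∑ a, ω a ^ 2 = 1) :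
    nullMatrix γ ω * nullMatrix γ ω = 1 := by
  have hω' : ∑ a, ((ω a : ℝ) : ℂ) ^ 2 = 1 := by exact_mod_cast hω
  rw [nullMatrix, sum_smul_mul_sum_smul_of_anticomm _ (gamma_zero_mul_gamma_succ_anticomm γ hγ),
    hω', map_one]

lemma nullMatrix_mul_gamma_zero (ω : Fin d → ℝ) :
    nullMatrix γ ω * γ 0 = -(γ 0 * nullMatrix γ ω) := by
  simp only [nullMatrix, Finset.sum_mul, Finset.mul_sum, ← Finset.sum_neg_distrib, smul_mul_assoc,
    mul_smul_comm, mul_assoc, gamma_succ_mul_gamma_zero γ hγ, mul_neg, smul_neg]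

lemma nullMatrix_conjTranspose (hstar0 : (γ 0)ᴴ = γ 0)
    (hstara : ∀ μ : Fin (d + 1), μ ≠ 0 → (γ μ)ᴴ = -(γ μ)) (ω : Fin d → ℝ) :
    (nullMatrix γ ω)ᴴ = nullMatrix γ ω := by
  simp only [nullMatrix, conjTranspose_sum, conjTranspose_smul, conjTranspose_mul, hstar0,
    hstara _ (Fin.succ_ne_zero _), Complex.star_def, Complex.conj_ofReal, neg_mul,
    gamma_succ_mul_gamma_zero γ hγ, neg_neg]

end Gamma

/-- Null decomposition bounds the product: with `[Ψ]_± = Ψ ± ω_a γ^0 γ^a Ψ` for a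
unit vector `ω`, one has
`|Ψ^* γ^0 Φ| ≤ (1/4)(|[Ψ]_-||[Φ]_-| + |[Ψ]_-||[Φ]_+| + |[Ψ]_+||[Φ]_-|)`,
and in particular `|Ψ^* γ^0 Φ| ≤ C(|[Ψ]_-||Φ| + |Ψ||[Φ]_-|)` for an absolute `C`. -/
theorem null_product_bound (d N : ℕ) (γ : Fin (d + 1) → Matrix (Fin N) (Fin N) ℂ)
    (hγ : ∀ μ ν, γ μ * γ ν + γ ν * γ μ
      = (-2 * minkEta d μ ν) • (1 : Matrix (Fin N) (Fin N) ℂ))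
    (hstar0 : (γ 0)ᴴ = γ 0)
    (hstara : ∀ μ : Fin (d + 1), μ ≠ 0 → (γ μ)ᴴ = -(γ μ))
    (ω : Fin d → ℝ) (hω : ∑ a, ω a ^ 2 = 1) (Ψ Φ : Fin N → ℂ) :
    ‖star Ψ ⬝ᵥ (γ 0).mulVec Φ‖ ≤
        (1 / 4) *
          (evnorm (Ψ - ∑ a, ((ω a : ℝ) : ℂ) • (γ 0 * γ a.succ).mulVec Ψ)
              * evnorm (Φ - ∑ a, ((ω a : ℝ) : ℂ) • (γ 0 * γ a.succ).mulVec Φ)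
            + evnorm (Ψ - ∑ a, ((ω a : ℝ) : ℂ) • (γ 0 * γ a.succ).mulVec Ψ)
              * evnorm (Φ + ∑ a, ((ω a : ℝ) : ℂ) • (γ 0 * γ a.succ).mulVec Φ)
            + evnorm (Ψ + ∑ a, ((ω a : ℝ) : ℂ) • (γ 0 * γ a.succ).mulVec Ψ)
              * evnorm (Φ - ∑ a, ((ω a : ℝ) : ℂ) • (γ 0 * γ a.succ).mulVec Φ)) ∧
      ∃ C > (0 : ℝ), ‖star Ψ ⬝ᵥ (γ 0).mulVec Φ‖ ≤
        C * (evnorm (Ψ - ∑ a, ((ω a : ℝ) : ℂ) • (γ 0 * γ a.succ).mulVec Ψ) * evnorm Φ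
          + evnorm Ψ * evnorm (Φ - ∑ a, ((ω a : ℝ) : ℂ) • (γ 0 * γ a.succ).mulVec Φ)) := by
  have hA := nullMatrix_mul_self γ hγ hω
  have hAH := nullMatrix_conjTranspose γ hγ hstar0 hstara ω
  have hAg := nullMatrix_mul_gamma_zero γ hγ ω
  have hg : (γ 0)ᴴ * γ 0 = 1 := by rw [hstar0, gamma_zero_mul_self γ hγ]
  have hsub (v : Fin N → ℂ) :
      v - ∑ a, ((ω a : ℝ) : ℂ) • (γ 0 * γ a.succ) *ᵥ v = (1 - nullMatrix γ ω) *ᵥ v := by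
    rw [sub_mulVec, one_mulVec, nullMatrix_mulVec]
  have hadd (v : Fin N → ℂ) :
      v + ∑ a, ((ω a : ℝ) : ℂ) • (γ 0 * γ a.succ) *ᵥ v = (1 + nullMatrix γ ω) *ᵥ v := by
    rw [add_mulVec, one_mulVec, nullMatrix_mulVec]
  simp only [hsub, hadd]
  refine ⟨norm_star_dotProduct_mulVec_le_null_split hAH hA hAg hg Ψ Φ, 1, one_pos, ?_⟩
  simpa only [one_mul] using norm_star_dotProduct_mulVec_le_null_minus hAH hA hAg hg Ψ Φ
end
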